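/- Let X = {x₁,...,x_n}, G the reduced Gröbner basis of a homogeneous ideal 𝔞 in the graded free algebra k⟨X⟩ with lw(G) consisting of Lyndon words, and A = k⟨X⟩/𝔞. Then the Hilbert series of A factors as H_A(t) = ∏_{u ∈ 𝔏(G)} (1 − t^{deg(u)})^{-1}, and the Gelfand-Kirillov dimension of A equals the cardinality of 𝔏(G); in particular A has polynomial growth if and only if 𝔏(G) is finite. -/

import Mathlib

namespace NC

/-- The free associative algebra on the alphabet `X`, with the words (the free
monoid on `X`) as a basis. -/
abbrev FA (k X : Type) [Field k] := MonoidAlgebra k (FreeMonoid X)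

variable {k X : Type} [Field k]

/-- The monomial on a word `u` (with coefficient `1`). -/
noncomputable def mono (k : Type) [Field k] {X : Type} (u : FreeMonoid X) : FA k X :=
  MonoidAlgebra.of k (FreeMonoid X) u

/-- `u` is a factor of `v`. -/
def IsFactor (u v : FreeMonoid X) : Prop := ∃ w₁ w₂ : FreeMonoid X, w₁ * u * w₂ = v

/-- The leading word of a polynomial (junk value `1` for the zero polynomial). -/
noncomputable def lw [LinearOrder (FreeMonoid X)] (f : FA k X) : FreeMonoid X :=
  WithBot.unbotD 1 f.coeff.support.max

/-- The set of leading words of the nonzero members of `G`. -/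
def lwSet [LinearOrder (FreeMonoid X)] (G : Set (FA k X)) : Set (FreeMonoid X) :=
  {u | ∃ f ∈ G, f ≠ 0 ∧ lw f = u}

/-- The normal words modulo `G` : words having no factor among the leading words of `G`. -/
def nw [LinearOrder (FreeMonoid X)] (G : Set (FA k X)) : Set (FreeMonoid X) :=
  {u | ∀ v ∈ lwSet G, ¬ IsFactor v u}

/-- The two-sided ideal (as a `k`-submodule) generated by a set `S`. -/
noncomputable def ideal2 (k : Type) [Field k] {X : Type} (S : Set (FA k X)) : Submodule k (FA k X) :=
  Submodule.span k {x | ∃ a s b, s ∈ S ∧ x = a * s * b}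

/-- A `k`-submodule of the free algebra which is a two-sided ideal. -/
def IsTwoSided (𝔞 : Submodule k (FA k X)) : Prop :=
  ∀ a x : FA k X, x ∈ 𝔞 → a * x ∈ 𝔞 ∧ x * a ∈ 𝔞

/-- `G` is a Gröbner basis of the (two-sided) ideal `𝔞`. -/
def IsGrobner [LinearOrder (FreeMonoid X)] (𝔞 : Submodule k (FA k X))
    (G : Set (FA k X)) : Prop :=
  (∀ g ∈ G, g ∈ 𝔞) ∧ ∀ f ∈ 𝔞, f ≠ 0 → lw f ∉ nw G

/-- `G` is reduced: every member is monic and normal modulo the remaining members. -/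
def IsReducedGB [LinearOrder (FreeMonoid X)] (G : Set (FA k X)) : Prop :=
  ∀ f ∈ G, f.coeff (lw f) = 1 ∧ ∀ u ∈ f.coeff.support, u ∈ nw (G \ {f})

/-- The fixed linear order on words is admissible. -/
def IsAdmissible (X : Type) [LinearOrder (FreeMonoid X)] : Prop :=
  WellFoundedLT (FreeMonoid X) ∧ (∀ u : FreeMonoid X, u ≠ 1 → 1 < u) ∧
    ∀ u v w₁ w₂ : FreeMonoid X, u < v → w₁ * u * w₂ < w₁ * v * w₂

end NC

namespace NC2
open NC
variable {k X : Type} [Field k]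

/-- The (multi)degree of a word, for the grading determined by `e` on the letters. -/
def mdeg {σ : Type} [AddCommMonoid σ] (e : X → σ) (w : FreeMonoid X) : σ :=
  ((FreeMonoid.toList w).map e).sum

/-- `f` is homogeneous of degree `α`. -/
def IsHomog {σ : Type} [AddCommMonoid σ] (e : X → σ) (α : σ) (f : NC.FA k X) : Prop :=
  ∀ u ∈ f.coeff.support, mdeg e u = α

open Classical in
/-- The degree-`α` homogeneous component of `f`. -/
noncomputable def homComp {σ : Type} [AddCommMonoid σ] (e : X → σ) (α : σ) (f : NC.FA k X) :
    NC.FA k X :=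
  MonoidAlgebra.ofCoeff (Finsupp.filter (fun u => mdeg e u = α) f.coeff)

/-- A homogeneous (two-sided) ideal. -/
def IsHomogIdeal {σ : Type} [AddCommMonoid σ] (e : X → σ) (𝔞 : Submodule k (NC.FA k X)) : Prop :=
  NC.IsTwoSided 𝔞 ∧ ∀ f ∈ 𝔞, ∀ α : σ, homComp e α f ∈ 𝔞

/-- Polynomials supported on a given set of words. -/
noncomputable def wsupported (k : Type) [Field k] {X : Type} (S : Set (FreeMonoid X)) :
    Submodule k (NC.FA k X) :=
  (Finsupp.supported k k S).comap (MonoidAlgebra.coeffLinearEquiv k).toLinearMap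

/-- Dimension of the image, in the quotient by `𝔞`, of the span of the words in `S`. -/
noncomputable def hilbS (𝔞 : Submodule k (NC.FA k X)) (S : Set (FreeMonoid X)) : ℕ :=
  Module.finrank k ↥((wsupported k S).map 𝔞.mkQ)

/-- The multigraded Hilbert function of the quotient algebra `k⟨X⟩/𝔞`. -/
noncomputable def hilb {σ : Type} [AddCommMonoid σ] (e : X → σ) (𝔞 : Submodule k (NC.FA k X))
    (α : σ) : ℕ :=
  hilbS 𝔞 {u | mdeg e u = α}

/-- The monomial ideal on a set of words. -/
noncomputable def monIdeal (k : Type) [Field k] {X : Type} (V : Set (FreeMonoid X)) :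
    Submodule k (NC.FA k X) :=
  NC.ideal2 k ((fun u => NC.mono k u) '' V)

/-- Partial sums of a Hilbert function. -/
def psum (H : ℕ → ℕ) (n : ℕ) : ℕ := ∑ i ∈ Finset.range (n + 1), H i

/-- The growth function is bounded by a polynomial of degree `d`. -/
def PolyBoundedBy (H : ℕ → ℕ) (d : ℕ) : Prop := ∃ C : ℕ, ∀ n, psum H n ≤ C * (n + 1) ^ d

/-- Polynomial growth (of some degree). -/
def PolyGrowth (H : ℕ → ℕ) : Prop := ∃ d, PolyBoundedBy H d

/-- Polynomial growth of degree exactly `d`. -/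
def PolyGrowthDeg (H : ℕ → ℕ) (d : ℕ) : Prop :=
  ∃ C : ℕ, 0 < C ∧ ∀ n, psum H n ≤ C * (n + 1) ^ d ∧ (n + 1) ^ d ≤ C * psum H n

/-- Gelfand-Kirillov dimension of a graded algebra with Hilbert function `H`, as an
extended natural number. -/
noncomputable def gkdimH (H : ℕ → ℕ) : ℕ∞ :=
  sInf ((fun d : ℕ => (d : ℕ∞)) '' {d | PolyBoundedBy H d})

end NC2

namespace NC4
open NC
variable {N : ℕ}

/-- The lexicographic comparison `u >_lex v` on words over the ordered alphabet `Fin N`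
(with `x_i > x_j` iff `i > j`). -/
def LexGt (u v : FreeMonoid (Fin N)) : Prop :=
  ∃ (r s t : FreeMonoid (Fin N)) (i j : Fin N), j < i ∧
    u = r * FreeMonoid.of i * s ∧ v = r * FreeMonoid.of j * t

/-- Lyndon words: nonempty words `u` with `u >_lex w*v` for every nontrivial
factorization `u = v*w`. -/
def IsLyndon (u : FreeMonoid (Fin N)) : Prop :=
  u ≠ 1 ∧ ∀ v w : FreeMonoid (Fin N), v ≠ 1 → w ≠ 1 → u = v * w → LexGt u (w * v)

/-- The plex comparison `u >_plex v`: `u` is a proper prefix of `v`, or `u >_lex v`. -/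
def PlexGt (u v : FreeMonoid (Fin N)) : Prop :=
  (∃ w : FreeMonoid (Fin N), w ≠ 1 ∧ v = u * w) ∨ LexGt u v

/-- `u ≤_plex v`. -/
def PlexLe (u v : FreeMonoid (Fin N)) : Prop := u = v ∨ PlexGt v u

variable {k : Type} [Field k]

/-- `𝔏(G)`: the set of Lyndon words which are normal modulo `G`. -/
def LyndonNormal [LinearOrder (FreeMonoid (Fin N))] (G : Set (NC.FA k (Fin N))) :
    Set (FreeMonoid (Fin N)) :=
  {u | IsLyndon u ∧ u ∈ NC.nw G}

end NC4

/-!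
Reduction modulo the Gröbner basis shows that the normal words of degree `n` form a basis of
`A_n`. Every word is uniquely a `≤_plex`-sorted product of Lyndon words (Chen–Fox–Lyndon); the
factors of a normal word are normal, and conversely a sorted product of normal Lyndon words is
normal, because an obstruction is Lyndon and a Lyndon factor of a sorted product of Lyndon words
lies inside one of them. So `dim A_n` counts the multisets from `𝔏(G)` of total degree `n`, which
is the product formula. Those of degree `≤ n` supported on a finite `F ⊆ 𝔏(G)` number at least a
constant times `(n + 1) ^ |F|`, and if `𝔏(G)` is finite, all of them number at most
`(n + 1) ^ |𝔏(G)|`; so the growth degree is exactly `|𝔏(G)|`.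
-/

-- The combinatorics of words is done on `List α`, where `++` computes, and transferred to
-- `FreeMonoid (Fin N)` through `FreeMonoid.toList`.

section ListLemmas

variable {β : Type*}

theorem List.exists_not_rel_of_not_isChain {R : β → β → Prop} {L : List β}
    (h : ¬ L.IsChain R) : ∃ A x y B, L = A ++ x :: y :: B ∧ ¬ R x y := by
  induction L with
  | nil => exact absurd List.isChain_nil h
  | cons a L ih =>
    rcases L with _ | ⟨b, L⟩
    · exact absurd (List.isChain_singleton a) h
    rw [List.isChain_cons_cons, not_and_or] at h
    rcases h with hab | h
    · exact ⟨[], a, b, L, rfl, hab⟩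
    · obtain ⟨A, x, y, B, hL, hxy⟩ := ih h
      exact ⟨a :: A, x, y, B, by rw [hL]; rfl, hxy⟩

theorem List.exists_prefix_of_prefix_flatten {L : List (List β)} {m : List β} (hm : m ≠ [])
    (h : m <+: L.flatten) :
    ∃ L₁ x L₂ p, L = L₁ ++ x :: L₂ ∧ p ≠ [] ∧ p <+: x ∧ m = L₁.flatten ++ p := by
  induction L generalizing m with
  | nil => exact absurd (List.prefix_nil.1 (by simpa using h)) hm
  | cons x L ih =>
    obtain ⟨z, hz⟩ := h
    rw [List.flatten_cons] at hz
    rcases List.append_eq_append_iff.1 hz with ⟨a, hx, -⟩ | ⟨c, rfl, hc⟩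
    · exact ⟨[], x, L, m, rfl, hm, ⟨a, hx.symm⟩, by simp⟩
    rcases eq_or_ne c [] with rfl | hc'
    · exact ⟨[], x, L, x, rfl, by simpa using hm, List.prefix_refl x, by simp⟩
    · obtain ⟨L₁, y, L₂, p, rfl, hp, hpy, rfl⟩ := ih (m := c) hc' ⟨z, hc.symm⟩
      exact ⟨x :: L₁, y, L₂, p, rfl, hp, hpy, by simp⟩

theorem List.infix_flatten_cases {L : List (List β)} {v : List β} (hv : v ≠ [])
    (h : v <:+: L.flatten) :
    (∃ y ∈ L, v <:+: y) ∨ ∃ A y B q r, L = A ++ y :: B ∧ q ≠ [] ∧ r ≠ [] ∧ q <:+ y ∧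
      r <+: B.flatten ∧ v = q ++ r := by
  induction L with
  | nil => exact absurd (List.infix_nil.1 (by simpa using h)) hv
  | cons y B ih =>
    have lift : v <:+: B.flatten → (∃ z ∈ y :: B, v <:+: z) ∨ ∃ A z B' q r, y :: B = A ++ z :: B' ∧
        q ≠ [] ∧ r ≠ [] ∧ q <:+ z ∧ r <+: B'.flatten ∧ v = q ++ r := by
      intro hB
      rcases ih hB with ⟨z, hz, hvz⟩ | ⟨A, z, B', q, r, rfl, hq, hr, hqz, hr', hqr⟩
      · exact Or.inl ⟨z, List.mem_cons_of_mem y hz, hvz⟩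
      · exact Or.inr ⟨y :: A, z, B', q, r, rfl, hq, hr, hqz, hr', hqr⟩
    obtain ⟨a, b, hab⟩ := h
    rw [List.flatten_cons, List.append_assoc] at hab
    rcases List.append_eq_append_iff.1 hab with ⟨c, rfl, hc⟩ | ⟨c, rfl, hc⟩
    · rcases List.append_eq_append_iff.1 hc with ⟨d, rfl, -⟩ | ⟨r, rfl, hr⟩
      · exact Or.inl ⟨_, List.mem_cons_self, a, d, by simp⟩
      rcases eq_or_ne r [] with rfl | hr'
      · exact Or.inl ⟨_, List.mem_cons_self, a, [], by simp⟩
      rcases eq_or_ne c [] with rfl | hc'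
      · exact lift ⟨[], b, by simpa using hr.symm⟩
      · exact Or.inr ⟨[], a ++ c, B, c, r, rfl, hc', hr', ⟨a, rfl⟩, ⟨b, hr.symm⟩, rfl⟩
    · exact lift ⟨c, b, by simpa using hc.symm⟩

end ListLemmas

namespace ListWord

variable {α : Type*} [LinearOrder α]

def LexGt (u v : List α) : Prop :=
  ∃ (r s t : List α) (i j : α), j < i ∧ u = r ++ i :: s ∧ v = r ++ j :: t

theorem not_lexGt_nil (u : List α) : ¬ LexGt u [] := by
  rintro ⟨r, s, t, i, j, -, -, hv⟩; simp at hv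

theorem not_nil_lexGt (v : List α) : ¬ LexGt [] v := by
  rintro ⟨r, s, t, i, j, -, hu, -⟩; simp at hu

namespace LexGt

variable {u v w : List α}

theorem append (h : LexGt u v) (x y : List α) : LexGt (u ++ x) (v ++ y) := by
  obtain ⟨r, s, t, i, j, hij, rfl, rfl⟩ := h
  exact ⟨r, s ++ x, t ++ y, i, j, hij, by simp, by simp⟩

theorem append_fst (h : LexGt u v) (x : List α) : LexGt (u ++ x) v := by
  simpa using h.append x []

theorem append_snd (h : LexGt u v) (y : List α) : LexGt u (v ++ y) := by
  simpa using h.append [] y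

theorem prepend (h : LexGt u v) (w : List α) : LexGt (w ++ u) (w ++ v) := by
  obtain ⟨r, s, t, i, j, hij, rfl, rfl⟩ := h
  exact ⟨w ++ r, s, t, i, j, hij, by simp, by simp⟩

theorem not_prefix (h : LexGt u v) : ¬ u <+: v := by
  rintro ⟨c, rfl⟩
  obtain ⟨r, s, t, i, j, hij, hu, hv⟩ := h
  simp only [hu, List.append_assoc, List.cons_append, List.append_cancel_left_eq,
    List.cons.injEq] at hv
  exact (hv.1 ▸ hij).false

theorem irrefl (u : List α) : ¬ LexGt u u := fun h => h.not_prefix (List.prefix_refl u)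

theorem trans (h₁ : LexGt u v) (h₂ : LexGt v w) : LexGt u w := by
  obtain ⟨r₁, s₁, t₁, i₁, j₁, hij₁, rfl, hv₁⟩ := h₁
  obtain ⟨r₂, s₂, t₂, i₂, j₂, hij₂, hv₂, rfl⟩ := h₂
  rw [hv₁] at hv₂
  rcases List.append_eq_append_iff.1 hv₂ with ⟨_ | ⟨b, a⟩, rfl, hb⟩ | ⟨_ | ⟨b, a⟩, rfl, hb⟩
  · simp only [List.nil_append, List.cons.injEq] at hb
    exact ⟨r₁, s₁, t₂, i₁, j₂, hij₂.trans (hb.1 ▸ hij₁), rfl, by simp⟩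
  · simp only [List.cons_append, List.cons.injEq] at hb
    exact ⟨r₁, s₁, a ++ j₂ :: t₂, i₁, j₁, hij₁, rfl, by simp [hb.1]⟩
  · simp only [List.nil_append, List.cons.injEq] at hb
    exact ⟨r₂, s₁, t₂, i₁, j₂, hij₂.trans (hb.1 ▸ hij₁), by simp, rfl⟩
  · simp only [List.cons_append, List.cons.injEq] at hb
    exact ⟨r₂, a ++ i₁ :: s₁, t₂, i₂, j₂, hij₂, by simp [hb.1], rfl⟩

theorem asymm (h₁ : LexGt u v) (h₂ : LexGt v u) : False := irrefl u (h₁.trans h₂)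

theorem cases_of_append_right {x y : List α} (h : LexGt u (x ++ y)) :
    LexGt u x ∨ ∃ u', u = x ++ u' ∧ LexGt u' y := by
  obtain ⟨r, s, t, i, j, hij, rfl, hv⟩ := h
  rcases List.append_eq_append_iff.1 hv with ⟨a, rfl, hb⟩ | ⟨_ | ⟨b, a⟩, rfl, hb⟩
  · exact Or.inr ⟨a ++ i :: s, by simp, a, s, t, i, j, hij, rfl, hb⟩
  · exact Or.inr ⟨i :: s, by simp, [], s, t, i, j, hij, rfl, by simpa using hb.symm⟩
  · simp only [List.cons_append, List.cons.injEq] at hb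
    exact Or.inl ⟨r, s, a, i, b, hb.1 ▸ hij, rfl, rfl⟩

theorem cases_of_append_left {x y : List α} (h : LexGt (x ++ y) u) :
    LexGt x u ∨ ∃ u', u = x ++ u' ∧ LexGt y u' := by
  obtain ⟨r, s, t, i, j, hij, hu, rfl⟩ := h
  rcases List.append_eq_append_iff.1 hu with ⟨a, rfl, hb⟩ | ⟨_ | ⟨b, a⟩, rfl, hb⟩
  · exact Or.inr ⟨a ++ j :: t, by simp, a, s, t, i, j, hij, hb, rfl⟩
  · exact Or.inr ⟨j :: t, by simp, [], s, t, i, j, hij, by simpa using hb.symm, rfl⟩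
  · simp only [List.cons_append, List.cons.injEq] at hb
    exact Or.inl ⟨r, a, t, b, j, hb.1 ▸ hij, rfl, rfl⟩

end LexGt

theorem lexGt_trichotomy (u v : List α) : LexGt u v ∨ LexGt v u ∨ u <+: v ∨ v <+: u := by
  induction u generalizing v with
  | nil => exact Or.inr (Or.inr (Or.inl List.nil_prefix))
  | cons a u ih =>
    rcases v with _ | ⟨b, v⟩
    · exact Or.inr (Or.inr (Or.inr List.nil_prefix))
    rcases lt_trichotomy a b with h | rfl | h
    · exact Or.inr (Or.inl ⟨[], v, u, b, a, h, rfl, rfl⟩)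
    · rcases ih v with h | h | h | h
      · exact Or.inl (h.prepend [a])
      · exact Or.inr (Or.inl (h.prepend [a]))
      · exact Or.inr (Or.inr (Or.inl (List.cons_prefix_cons.2 ⟨rfl, h⟩)))
      · exact Or.inr (Or.inr (Or.inr (List.cons_prefix_cons.2 ⟨rfl, h⟩)))
    · exact Or.inl ⟨[], u, v, a, b, h, rfl, rfl⟩

def PlexGt (u v : List α) : Prop := (∃ w : List α, w ≠ [] ∧ v = u ++ w) ∨ LexGt u v

def PlexLe (u v : List α) : Prop := u = v ∨ PlexGt v u

namespace PlexGt

variable {u v w : List α}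

theorem of_lexGt (h : LexGt u v) : PlexGt u v := Or.inr h

theorem of_append {w : List α} (hw : w ≠ []) (h : v = u ++ w) : PlexGt u v := Or.inl ⟨w, hw, h⟩

theorem irrefl (u : List α) : ¬ PlexGt u u := by
  rintro (⟨w, hw, hv⟩ | h)
  · exact hw (by simpa using hv.symm)
  · exact LexGt.irrefl u h

theorem trans (h₁ : PlexGt u v) (h₂ : PlexGt v w) : PlexGt u w := by
  rcases h₁ with ⟨a, ha, rfl⟩ | h₁
  · rcases h₂ with ⟨b, hb, rfl⟩ | h₂
    · exact of_append (by simp [ha]) (List.append_assoc u a b)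
    · rcases h₂.cases_of_append_left with h | ⟨w', rfl, h⟩
      · exact of_lexGt h
      · exact of_append (by rintro rfl; exact not_lexGt_nil a h) rfl
  · rcases h₂ with ⟨b, hb, rfl⟩ | h₂
    · exact of_lexGt (h₁.append_snd b)
    · exact of_lexGt (h₁.trans h₂)

theorem asymm (h₁ : PlexGt u v) (h₂ : PlexGt v u) : False := irrefl u (h₁.trans h₂)

theorem trans_plexLe (h₁ : PlexGt u v) (h₂ : PlexLe w v) : PlexGt u w := by
  rcases h₂ with rfl | h₂
  · exact h₁
  · exact h₁.trans h₂

theorem not_plexLe (h : PlexGt u v) : ¬ PlexLe u v := by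
  rintro (rfl | h')
  · exact irrefl u h
  · exact h.asymm h'

end PlexGt

theorem plexGt_trichotomy (u v : List α) : u = v ∨ PlexGt u v ∨ PlexGt v u := by
  rcases lexGt_trichotomy u v with h | h | ⟨c, rfl⟩ | ⟨c, rfl⟩
  · exact Or.inr (Or.inl (.of_lexGt h))
  · exact Or.inr (Or.inr (.of_lexGt h))
  · rcases eq_or_ne c [] with rfl | hc
    · exact Or.inl (by simp)
    · exact Or.inr (Or.inl (.of_append hc rfl))
  · rcases eq_or_ne c [] with rfl | hc
    · exact Or.inl (by simp)
    · exact Or.inr (Or.inr (.of_append hc rfl))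

theorem plexLe_of_prefix {p x : List α} (h : p <+: x) : PlexLe x p := by
  obtain ⟨w, rfl⟩ := h
  rcases eq_or_ne w [] with rfl | hw
  · exact Or.inl (List.append_nil p)
  · exact Or.inr (.of_append hw rfl)

theorem plexGt_of_not_plexLe {u v : List α} (h : ¬ PlexLe u v) : PlexGt u v := by
  rcases plexGt_trichotomy u v with rfl | h' | h'
  · exact absurd (Or.inl rfl) h
  · exact h'
  · exact absurd (Or.inr h') h

instance : IsTrans (List α) PlexLe where
  trans _ _ _ h₁ h₂ := by
    rcases h₁ with rfl | h₁
    · exact h₂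
    rcases h₂ with rfl | h₂
    · exact Or.inr h₁
    · exact Or.inr (h₂.trans h₁)

instance : Std.Antisymm (PlexLe (α := α)) where
  antisymm _ _ h₁ h₂ := by
    rcases h₁ with rfl | h₁
    · rfl
    rcases h₂ with rfl | h₂
    · rfl
    · exact (h₁.asymm h₂).elim

instance : Std.Total (PlexLe (α := α)) where
  total u v := by
    rcases plexGt_trichotomy u v with h | h | h
    · exact Or.inl (Or.inl h)
    · exact Or.inr (Or.inr h)
    · exact Or.inl (Or.inr h)

def IsLyndon (u : List α) : Prop :=
  u ≠ [] ∧ ∀ v w : List α, v ≠ [] → w ≠ [] → u = v ++ w → LexGt u w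

theorem isLyndon_iff_lexGt_rotations {u : List α} :
    IsLyndon u ↔ u ≠ [] ∧ ∀ v w : List α, v ≠ [] → w ≠ [] → u = v ++ w → LexGt u (w ++ v) := by
  refine ⟨fun ⟨hu, h⟩ => ⟨hu, fun v w hv hw huvw => (h v w hv hw huvw).append_snd v⟩,
    fun ⟨hu, h⟩ => ⟨hu, fun v w hv hw huvw => ?_⟩⟩
  rcases (h v w hv hw huvw).cases_of_append_right with h' | ⟨u', hwu', hu'v⟩
  · exact h'
  -- otherwise `u = w ++ u'` with `u' >_lex v`, and the rotation `u' ++ w` beats `u = v ++ w`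
  · have hu' : u' ≠ [] := by rintro rfl; exact not_nil_lexGt v hu'v
    exact ((hu'v.append w w).asymm (huvw ▸ h w u' hw hu' hwu')).elim

theorem isLyndon_singleton (a : α) : IsLyndon [a] := by
  refine ⟨List.cons_ne_nil a [], fun v w hv hw h => ?_⟩
  have := congrArg List.length h
  simp only [List.length_singleton, List.length_append] at this
  have := List.length_pos_iff.2 hv
  have := List.length_pos_iff.2 hw
  omega

namespace IsLyndon

variable {u v : List α}

theorem ne_nil (hu : IsLyndon u) : u ≠ [] := hu.1

theorem lexGt_of_append (hu : IsLyndon u) {p s : List α} (hp : p ≠ []) (hs : s ≠ [])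
    (h : u = p ++ s) : LexGt u s :=
  hu.2 p s hp hs h

theorem plexLe_of_suffix (hu : IsLyndon u) {s : List α} (hs : s ≠ []) (h : s <:+ u) :
    PlexLe s u := by
  obtain ⟨p, rfl⟩ := h
  rcases eq_or_ne p [] with rfl | hp
  · exact Or.inl rfl
  · exact Or.inr (.of_lexGt (hu.lexGt_of_append hp hs rfl))

theorem lexGt_append_right (hu : IsLyndon u) (hv : IsLyndon v) (h : PlexGt u v) :
    LexGt (u ++ v) v := by
  rcases h with ⟨w, hw, rfl⟩ | h
  · simpa using (hv.lexGt_of_append hu.ne_nil hw rfl).prepend u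
  · exact h.append_fst v

theorem append (hu : IsLyndon u) (hv : IsLyndon v) (h : PlexGt u v) : IsLyndon (u ++ v) := by
  refine ⟨by simp [hu.ne_nil], fun p s hp hs hps => ?_⟩
  have key := hu.lexGt_append_right hv h
  rcases List.append_eq_append_iff.1 hps with ⟨a, rfl, hva⟩ | ⟨c, rfl, rfl⟩
  · rcases eq_or_ne a [] with rfl | ha
    · simpa [hva] using key
    have hvs := hv.lexGt_of_append ha hs hva
    rcases h with ⟨w, -, rfl⟩ | h
    · rcases hvs.cases_of_append_left with h' | ⟨s', rfl, hws'⟩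
      · exact h'.append_fst _
      · have hs' : s' ≠ [] := by rintro rfl; exact not_lexGt_nil w hws'
        simpa using (hv.lexGt_of_append (p := a ++ u) (by simp [ha]) hs' (by simp [hva])).prepend u
    · exact (h.trans hvs).append_fst v
  · rcases eq_or_ne c [] with rfl | hc
    · simpa using key
    · exact (hu.lexGt_of_append hp hc rfl).append v v

end IsLyndon

/-- Merge two adjacent factors that are out of `≤_plex` order into one (`IsLyndon.append`) until
the list is sorted. -/
theorem exists_sorted_lyndon_of_lyndon (L : List (List α)) (hL : ∀ l ∈ L, IsLyndon l) :
    ∃ M : List (List α), (∀ m ∈ M, IsLyndon m) ∧ M.IsChain PlexLe ∧ M.flatten = L.flatten := by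
  by_cases hc : L.IsChain PlexLe
  · exact ⟨L, hL, hc, rfl⟩
  obtain ⟨A, x, y, B, rfl, hxy⟩ := List.exists_not_rel_of_not_isChain hc
  have hxy' : IsLyndon (x ++ y) :=
    (hL x (by simp)).append (hL y (by simp)) (plexGt_of_not_plexLe hxy)
  obtain ⟨M, hM, hMc, hMf⟩ := exists_sorted_lyndon_of_lyndon (A ++ (x ++ y) :: B) (by
    intro l hl
    simp only [List.mem_append, List.mem_cons] at hl
    rcases hl with hl | rfl | hl
    · exact hL l (by simp [hl])
    · exact hxy'
    · exact hL l (by simp [hl]))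
  exact ⟨M, hM, hMc, by simp [hMf]⟩
termination_by L.length
decreasing_by subst_vars; simp

theorem exists_lyndon_factorization (w : List α) :
    ∃ L : List (List α), (∀ l ∈ L, IsLyndon l) ∧ L.IsChain PlexLe ∧ L.flatten = w := by
  obtain ⟨M, hM, hMc, hMf⟩ := exists_sorted_lyndon_of_lyndon (w.map ([·])) (by
    simp only [List.mem_map]
    rintro _ ⟨a, -, rfl⟩
    exact isLyndon_singleton a)
  exact ⟨M, hM, hMc, hMf.trans (List.flatMap_singleton' w)⟩

theorem IsLyndon.length_le_of_prefix_flatten {l m : List α} {L : List (List α)}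
    (hL : ∀ x ∈ l :: L, IsLyndon x) (hc : (l :: L).IsChain PlexLe) (hm : IsLyndon m)
    (h : m <+: (l :: L).flatten) : m.length ≤ l.length := by
  by_contra hlt
  obtain ⟨_ | ⟨a, L₁⟩, x, L₂, p, hsplit, hp, hpx, rfl⟩ :=
    List.exists_prefix_of_prefix_flatten hm.ne_nil h
  · obtain ⟨rfl, -⟩ := List.cons.inj hsplit
    exact hlt (by simpa using hpx.length_le)
  obtain ⟨hla, rfl⟩ := List.cons.inj hsplit
  subst hla
  -- `l >_plex m >_plex p ≥_plex x ≥_plex l`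
  have hlx : PlexLe l x := List.rel_of_pairwise_cons (List.isChain_iff_pairwise.1 hc) (by simp)
  have hlm : PlexGt l ((l :: L₁).flatten ++ p) :=
    .of_append (w := L₁.flatten ++ p) (by simp [hp]) (by simp)
  have hmp : PlexGt ((l :: L₁).flatten ++ p) p :=
    .of_lexGt (hm.lexGt_of_append (by simp [(hL l List.mem_cons_self).ne_nil]) hp rfl)
  exact ((hlm.trans hmp).trans_plexLe (plexLe_of_prefix hpx)).not_plexLe hlx

theorem lyndon_factorization_unique {L M : List (List α)} (hL : ∀ x ∈ L, IsLyndon x)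
    (hLc : L.IsChain PlexLe) (hM : ∀ x ∈ M, IsLyndon x) (hMc : M.IsChain PlexLe)
    (h : L.flatten = M.flatten) : L = M := by
  induction L generalizing M with
  | nil =>
    rcases M with _ | ⟨m, M⟩
    · rfl
    · simp only [List.flatten_nil, List.flatten_cons, List.nil_eq, List.append_eq_nil_iff] at h
      exact absurd h.1 (hM m List.mem_cons_self).ne_nil
  | cons l L ih =>
    rcases M with _ | ⟨m, M⟩
    · simp only [List.flatten_nil, List.flatten_cons, List.append_eq_nil_iff] at h
      exact absurd h.1 (hL l List.mem_cons_self).ne_nil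
    have hl : l <+: (l :: L).flatten := by simp
    have hm : m <+: (l :: L).flatten := by simp [h]
    have hml := IsLyndon.length_le_of_prefix_flatten hL hLc (hM m List.mem_cons_self) hm
    have hlm := IsLyndon.length_le_of_prefix_flatten hM hMc (hL l List.mem_cons_self) (h ▸ hl)
    obtain rfl : l = m := (List.prefix_of_prefix_length_le hl hm hlm).eq_of_length
      (le_antisymm hlm hml)
    rw [ih (fun x hx => hL x (List.mem_cons_of_mem l hx)) hLc.tail
      (fun x hx => hM x (List.mem_cons_of_mem l hx)) hMc.tail
      (by simpa using h)]

theorem IsLyndon.exists_infix_of_infix_flatten {v : List α} (hv : IsLyndon v)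
    {L : List (List α)} (hL : ∀ x ∈ L, IsLyndon x) (hc : L.IsChain PlexLe)
    (h : v <:+: L.flatten) : ∃ x ∈ L, v <:+: x := by
  rcases List.infix_flatten_cases hv.ne_nil h with h' | ⟨A, y, B, q, r, rfl, hq, hr, hqy, hrB, rfl⟩
  · exact h'
  exfalso
  obtain ⟨B₁, x, B₂, p, rfl, hp, hpx, rfl⟩ := List.exists_prefix_of_prefix_flatten hr hrB
  -- `q >_plex v >_plex p ≥_plex x ≥_plex y ≥_plex q`
  have hyx : PlexLe y x := by
    have := (List.pairwise_append.1 (List.isChain_iff_pairwise.1 hc)).2.1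
    exact List.rel_of_pairwise_cons this (by simp)
  have hqv : PlexGt q (q ++ (B₁.flatten ++ p)) := .of_append hr rfl
  have hvp : PlexGt (q ++ (B₁.flatten ++ p)) p :=
    .of_lexGt (hv.lexGt_of_append (p := q ++ B₁.flatten) (by simp [hq]) hp (by simp))
  have hqy' : PlexLe q y := (hL y (by simp)).plexLe_of_suffix hq hqy
  exact (((hqv.trans hvp).trans_plexLe (plexLe_of_prefix hpx)).trans_plexLe hyx).not_plexLe hqy'

end ListWord

namespace NC

variable {X : Type}

theorem isFactor_iff_infix {u v : FreeMonoid X} : IsFactor u v ↔ u.toList <:+: v.toList := by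
  constructor
  · rintro ⟨w₁, w₂, rfl⟩
    exact ⟨w₁.toList, w₂.toList, by simp [FreeMonoid.toList_mul]⟩
  · rintro ⟨w₁, w₂, h⟩
    exact ⟨.ofList w₁, .ofList w₂,
      FreeMonoid.toList.injective (by simp [FreeMonoid.toList_mul, ← h])⟩

theorem IsFactor.trans {u v w : FreeMonoid X} (huv : IsFactor u v) (hvw : IsFactor v w) :
    IsFactor u w := by
  obtain ⟨a, b, rfl⟩ := huv
  obtain ⟨c, d, rfl⟩ := hvw
  exact ⟨c * a, b * d, by simp [mul_assoc]⟩

variable {k : Type} [Field k]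

theorem support_nonempty {f : FA k X} (hf : f ≠ 0) : f.coeff.support.Nonempty :=
  Finsupp.support_nonempty_iff.2 fun h => hf (MonoidAlgebra.coeff_injective h)

theorem mono_eq_single (u : FreeMonoid X) : mono k u = MonoidAlgebra.single u 1 :=
  MonoidAlgebra.of_apply ..

theorem support_mono (u : FreeMonoid X) : (mono k u).coeff.support = {u} := by
  rw [mono_eq_single]
  exact Finsupp.support_single u one_ne_zero

theorem coeff_mono_mul_mul_mono (g : FA k X) (w₁ w₂ w : FreeMonoid X) :
    (mono k w₁ * g * mono k w₂).coeff (w₁ * w * w₂) = g.coeff w := by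
  rw [mono_eq_single, mono_eq_single,
    MonoidAlgebra.coeff_mul_single_eq_coeff_mul _ fun _ _ => mul_left_inj w₂,
    MonoidAlgebra.coeff_single_mul_eq_mul_coeff _ fun _ _ => mul_right_inj w₁, one_mul, mul_one]

variable [LinearOrder (FreeMonoid X)]

theorem mem_nw_of_isFactor {G : Set (FA k X)} {u v : FreeMonoid X} (hv : v ∈ nw G)
    (huv : IsFactor u v) : u ∈ nw G :=
  fun x hx hxu => hv x hx (hxu.trans huv)

theorem lw_eq_max' {f : FA k X} (hf : f ≠ 0) :
    lw f = f.coeff.support.max' (support_nonempty hf) := by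
  rw [lw, ← Finset.coe_max' (support_nonempty hf)]
  rfl

theorem lw_mem_support {f : FA k X} (hf : f ≠ 0) : lw f ∈ f.coeff.support := by
  rw [lw_eq_max' hf]
  exact Finset.max'_mem _ _

theorem le_lw {f : FA k X} {u : FreeMonoid X} (hu : u ∈ f.coeff.support) : u ≤ lw f := by
  have hf : f ≠ 0 := by rintro rfl; simp at hu
  rw [lw_eq_max' hf]
  exact Finset.le_max' _ _ hu

theorem le_of_mem_support_mono_mul_mul_mono (hadm : IsAdmissible X) {g : FA k X}
    (w₁ w₂ : FreeMonoid X) {x : FreeMonoid X} (hx : x ∈ (mono k w₁ * g * mono k w₂).coeff.support) :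
    x ≤ w₁ * lw g * w₂ := by
  classical
  have hx := MonoidAlgebra.support_coeff_mul_subset _ _ hx
  rw [support_mono, Finset.mul_singleton] at hx
  obtain ⟨y, hy, rfl⟩ := Finset.mem_image.1 hx
  have hy := MonoidAlgebra.support_coeff_mul_subset _ _ hy
  rw [support_mono, Finset.singleton_mul] at hy
  obtain ⟨w, hw, rfl⟩ := Finset.mem_image.1 hy
  rcases (le_lw hw).lt_or_eq with hlt | rfl
  · exact (hadm.2.2 _ _ w₁ w₂ hlt).le
  · exact le_rfl

theorem lw_sub_smul_lt {f q : FA k X} (hq : q.coeff (lw f) = 1)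
    (hqle : ∀ x ∈ q.coeff.support, x ≤ lw f) (h : f - f.coeff (lw f) • q ≠ 0) :
    lw (f - f.coeff (lw f) • q) < lw f := by
  classical
  have hmem := lw_mem_support h
  refine lt_of_le_of_ne ?_ fun heq => Finsupp.mem_support_iff.1 hmem ?_
  · rcases Finset.mem_union.1 (Finsupp.support_sub hmem) with hf | hq'
    · exact le_lw hf
    · exact hqle _ (Finsupp.support_smul hq')
  · simp [heq, hq]

variable {𝔞 : Submodule k (FA k X)} {G : Set (FA k X)}

/-- The witness is `u` itself if `u` is normal, and `w₁ * g * w₂` if `u = w₁ * lw g * w₂`. -/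
theorem exists_monic_mem_sup_wsupported_nw (hadm : IsAdmissible X) (h2s : IsTwoSided 𝔞)
    (hG : ∀ g ∈ G, g ∈ 𝔞) (hmon : ∀ g ∈ G, g.coeff (lw g) = 1) (u : FreeMonoid X) :
    ∃ q ∈ 𝔞 ⊔ NC2.wsupported k (nw G), q.coeff u = 1 ∧ ∀ x ∈ q.coeff.support, x ≤ u := by
  by_cases hu : u ∈ nw G
  · refine ⟨mono k u, Submodule.mem_sup_right ?_, by simp [mono_eq_single], ?_⟩
    · show ↑(mono k u).coeff.support ⊆ nw G
      simpa [support_mono] using hu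
    · simp [support_mono]
  obtain ⟨_, ⟨g, hg, hg0, rfl⟩, w₁, w₂, rfl⟩ : ∃ v ∈ lwSet G, IsFactor v u := by simpa [nw] using hu
  refine ⟨mono k w₁ * g * mono k w₂, Submodule.mem_sup_left ?_, ?_, ?_⟩
  · rw [mul_assoc]
    exact (h2s _ _ (h2s _ g (hG g hg)).2).1
  · rw [coeff_mono_mul_mul_mono, hmon g hg]
  · exact fun x hx => le_of_mem_support_mono_mul_mul_mono hadm w₁ w₂ hx

theorem mem_sup_wsupported_nw (hadm : IsAdmissible X) (h2s : IsTwoSided 𝔞)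
    (hG : ∀ g ∈ G, g ∈ 𝔞) (hmon : ∀ g ∈ G, g.coeff (lw g) = 1) (f : FA k X) :
    f ∈ 𝔞 ⊔ NC2.wsupported k (nw G) := by
  have := hadm.1
  induction hw : lw f using WellFoundedLT.induction generalizing f with
  | ind w ih =>
    subst hw
    by_cases hf : f = 0
    · rw [hf]
      exact zero_mem _
    obtain ⟨q, hq, hq1, hqle⟩ := exists_monic_mem_sup_wsupported_nw hadm h2s hG hmon (lw f)
    have hf' : f - f.coeff (lw f) • q ∈ 𝔞 ⊔ NC2.wsupported k (nw G) := by
      by_cases h0 : f - f.coeff (lw f) • q = 0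
      · rw [h0]
        exact zero_mem _
      · exact ih _ (lw_sub_smul_lt hq1 hqle h0) _ rfl
    simpa using add_mem hf' (Submodule.smul_mem _ (f.coeff (lw f)) hq)

end NC

namespace NC2

variable {X σ : Type} [AddCommMonoid σ]

theorem mdeg_mul (e : X → σ) (u v : FreeMonoid X) : mdeg e (u * v) = mdeg e u + mdeg e v := by
  simp [mdeg, FreeMonoid.toList_mul]

theorem mdeg_prod (e : X → σ) (l : List (FreeMonoid X)) :
    mdeg e l.prod = (l.map (mdeg e)).sum := by
  induction l with
  | nil => rfl
  | cons a l ih => rw [List.prod_cons, mdeg_mul, ih, List.map_cons, List.sum_cons]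

theorem length_le_mdeg {e : X → ℕ} (he : ∀ x, 0 < e x) (u : FreeMonoid X) :
    u.length ≤ mdeg e u := by
  simpa [mdeg, FreeMonoid.length] using
    List.length_le_sum_of_one_le (u.toList.map e) (List.forall_mem_map.2 fun x _ => he x)

theorem finite_setOf_mdeg_le [Finite X] {e : X → ℕ} (he : ∀ x, 0 < e x) (n : ℕ) :
    {u : FreeMonoid X | mdeg e u ≤ n}.Finite :=
  ((List.finite_length_le X n).preimage FreeMonoid.toList.injective.injOn).subset
    fun u hu => (length_le_mdeg he u).trans hu

open NC

variable {k : Type} [Field k]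

theorem wsupported_eq_supported (S : Set (FreeMonoid X)) :
    wsupported k S = MonoidAlgebra.supported k k S := rfl

open Classical in
theorem coeff_homComp (e : X → σ) (α : σ) (f : FA k X) (v : FreeMonoid X) :
    (homComp e α f).coeff v = if mdeg e v = α then f.coeff v else 0 := by
  simp [homComp, Finsupp.filter_apply]

theorem homComp_add (e : X → σ) (α : σ) (f g : FA k X) :
    homComp e α (f + g) = homComp e α f + homComp e α g := by
  ext v
  simp only [coeff_homComp, MonoidAlgebra.coeff_add, Finsupp.add_apply]
  split_ifs <;> simp

theorem homComp_mono (e : X → σ) {α : σ} {u : FreeMonoid X} (hu : mdeg e u = α) :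
    homComp e α (mono k u) = mono k u := by
  ext v
  rw [coeff_homComp]
  split_ifs with h
  · rfl
  · rw [mono_eq_single, MonoidAlgebra.coeff_single, Finsupp.single_eq_of_ne]
    rintro rfl
    exact h hu

theorem homComp_mem_wsupported (e : X → σ) (α : σ) {S : Set (FreeMonoid X)} {f : FA k X}
    (hf : f ∈ wsupported k S) : homComp e α f ∈ wsupported k ({u | mdeg e u = α} ∩ S) := by
  rw [wsupported_eq_supported, MonoidAlgebra.mem_supported'] at hf ⊢
  intro v hv
  rw [coeff_homComp]
  split_ifs with h
  · exact hf v fun hvS => hv ⟨h, hvS⟩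
  · rfl

variable [LinearOrder (FreeMonoid X)] {𝔞 : Submodule k (FA k X)} {G : Set (FA k X)}

/-- Take the degree-`α` component of a decomposition `mono u = a + r` with `a ∈ 𝔞` and `r`
normal; it stays in `𝔞` because `𝔞` is homogeneous. -/
theorem map_mkQ_wsupported_eq_inter_nw (hadm : IsAdmissible X) {e : X → σ} (hh : IsHomogIdeal e 𝔞)
    (hGB : IsGrobner 𝔞 G) (hmon : ∀ g ∈ G, g.coeff (lw g) = 1) (α : σ) :
    (wsupported k {u | mdeg e u = α}).map 𝔞.mkQ =
      (wsupported k ({u | mdeg e u = α} ∩ nw G)).map 𝔞.mkQ := by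
  refine le_antisymm ?_ (Submodule.map_mono (MonoidAlgebra.supported_mono Set.inter_subset_left))
  rw [wsupported_eq_supported, MonoidAlgebra.supported_eq_span_single, Submodule.map_span,
    Submodule.span_le]
  rintro _ ⟨_, ⟨u, hu, rfl⟩, rfl⟩
  obtain ⟨a, ha, r, hr, hmono⟩ :=
    Submodule.mem_sup.1 (mem_sup_wsupported_nw hadm hh.1 hGB.1 hmon (mono k u))
  have hsplit : mono k u = homComp e α a + homComp e α r := by
    rw [← homComp_add, hmono, homComp_mono e hu]
  refine ⟨homComp e α r, homComp_mem_wsupported e α hr, ?_⟩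
  change _ = 𝔞.mkQ (MonoidAlgebra.single u 1)
  rw [← mono_eq_single, Submodule.mkQ_apply, Submodule.mkQ_apply, Submodule.Quotient.eq, hsplit]
  simpa using Submodule.neg_mem _ (hh.2 a ha α)

/-- No finiteness is needed: for infinite `T` both sides are `0`. -/
theorem finrank_map_mkQ_wsupported (hGB : IsGrobner 𝔞 G) {T : Set (FreeMonoid X)} (hT : T ⊆ nw G) :
    Module.finrank k ((wsupported k T).map 𝔞.mkQ) = T.ncard := by
  have hinj : Function.Injective (𝔞.mkQ ∘ₗ (wsupported k T).subtype) := by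
    rw [← LinearMap.ker_eq_bot, LinearMap.ker_eq_bot']
    rintro ⟨x, hx⟩ hx0
    by_contra hne
    have hx0' : x ≠ 0 := fun h => hne (Subtype.ext h)
    exact hGB.2 x ((Submodule.Quotient.mk_eq_zero 𝔞).1 hx0) hx0' (hT (hx (lw_mem_support hx0')))
  rw [← Submodule.range_subtype (wsupported k T), ← LinearMap.range_comp,
    LinearMap.finrank_range_of_inj hinj, wsupported_eq_supported,
    (MonoidAlgebra.supportedEquivFinsupp T).finrank_eq, Module.finrank, rank_finsupp_self']
  rfl

theorem hilb_eq_ncard_nw (hadm : IsAdmissible X) {e : X → σ} (hh : IsHomogIdeal e 𝔞)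
    (hGB : IsGrobner 𝔞 G) (hmon : ∀ g ∈ G, g.coeff (lw g) = 1) (α : σ) :
    hilb e 𝔞 α = ({u | mdeg e u = α} ∩ nw G).ncard := by
  rw [hilb, hilbS, map_mkQ_wsupported_eq_inter_nw hadm hh hGB hmon,
    finrank_map_mkQ_wsupported hGB Set.inter_subset_right]

end NC2

namespace NC4

open NC

variable {N : ℕ}

theorem lexGt_iff_toList {u v : FreeMonoid (Fin N)} :
    LexGt u v ↔ ListWord.LexGt u.toList v.toList := by
  constructor
  · rintro ⟨r, s, t, i, j, hij, rfl, rfl⟩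
    exact ⟨r.toList, s.toList, t.toList, i, j, hij, by simp [FreeMonoid.toList_mul],
      by simp [FreeMonoid.toList_mul]⟩
  · rintro ⟨r, s, t, i, j, hij, hu, hv⟩
    exact ⟨.ofList r, .ofList s, .ofList t, i, j, hij,
      FreeMonoid.toList.injective (by simp [hu, FreeMonoid.toList_mul]),
      FreeMonoid.toList.injective (by simp [hv, FreeMonoid.toList_mul])⟩

theorem plexGt_iff_toList {u v : FreeMonoid (Fin N)} :
    PlexGt u v ↔ ListWord.PlexGt u.toList v.toList := by
  refine or_congr ⟨?_, ?_⟩ lexGt_iff_toList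
  · rintro ⟨w, hw, rfl⟩
    exact ⟨w.toList, fun h => hw (FreeMonoid.toList.injective h), FreeMonoid.toList_mul u w⟩
  · rintro ⟨w, hw, hv⟩
    exact ⟨.ofList w, fun h => hw (congrArg FreeMonoid.toList h), FreeMonoid.toList.injective hv⟩

theorem plexLe_iff_toList {u v : FreeMonoid (Fin N)} :
    PlexLe u v ↔ ListWord.PlexLe u.toList v.toList :=
  or_congr FreeMonoid.toList.injective.eq_iff.symm plexGt_iff_toList

theorem isLyndon_iff_toList {u : FreeMonoid (Fin N)} :
    IsLyndon u ↔ ListWord.IsLyndon u.toList := by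
  rw [ListWord.isLyndon_iff_lexGt_rotations, IsLyndon, ← FreeMonoid.toList.injective.ne_iff,
    FreeMonoid.toList_one, FreeMonoid.toList.forall_congr_left]
  refine and_congr_right fun _ => forall_congr' fun v => ?_
  rw [FreeMonoid.toList.forall_congr_left]
  refine forall_congr' fun w => ?_
  simp [lexGt_iff_toList, FreeMonoid.toList_mul, ← FreeMonoid.toList.injective.eq_iff]

instance : IsTrans (FreeMonoid (Fin N)) PlexLe where
  trans _ _ _ h₁ h₂ :=
    plexLe_iff_toList.2 (_root_.trans (plexLe_iff_toList.1 h₁) (plexLe_iff_toList.1 h₂))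

instance : Std.Antisymm (PlexLe (N := N)) where
  antisymm _ _ h₁ h₂ :=
    FreeMonoid.toList.injective (antisymm (plexLe_iff_toList.1 h₁) (plexLe_iff_toList.1 h₂))

instance : Std.Total (PlexLe (N := N)) where
  total u v := (Std.Total.total u.toList v.toList).imp plexLe_iff_toList.2 plexLe_iff_toList.2

variable {k : Type} [Field k] [LinearOrder (FreeMonoid (Fin N))]

def sortedLyndonLists (G : Set (FA k (Fin N))) : Set (List (FreeMonoid (Fin N))) :=
  {l | (∀ u ∈ l, u ∈ LyndonNormal G) ∧ l.IsChain PlexLe}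

theorem isLyndon_and_isChain_toList {G : Set (FA k (Fin N))} {l : List (FreeMonoid (Fin N))}
    (hl : l ∈ sortedLyndonLists G) :
    (∀ x ∈ l.map FreeMonoid.toList, ListWord.IsLyndon x) ∧
      (l.map FreeMonoid.toList).IsChain ListWord.PlexLe := by
  refine ⟨?_, (List.isChain_map _).2 (hl.2.imp fun _ _ => plexLe_iff_toList.1)⟩
  simp only [List.mem_map]
  rintro _ ⟨u, hu, rfl⟩
  exact isLyndon_iff_toList.1 (hl.1 u hu).1

/-- An obstruction is Lyndon, so it cannot occur in a sorted product of Lyndon words without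
occurring in one of the factors. -/
theorem bijOn_prod_sortedLyndonLists {G : Set (FA k (Fin N))}
    (hLyn : ∀ u ∈ lwSet G, IsLyndon u) :
    Set.BijOn List.prod (sortedLyndonLists G) (nw G) := by
  refine ⟨fun l hl v hv hvl => ?_, fun l₁ hl₁ l₂ hl₂ h => ?_, fun w hw => ?_⟩
  · obtain ⟨hLl, hcl⟩ := isLyndon_and_isChain_toList hl
    rw [isFactor_iff_infix, FreeMonoid.toList_prod] at hvl
    obtain ⟨_, hx, hvx⟩ :=
      (isLyndon_iff_toList.1 (hLyn v hv)).exists_infix_of_infix_flatten hLl hcl hvl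
    obtain ⟨u, hu, rfl⟩ := List.mem_map.1 hx
    exact (hl.1 u hu).2 v hv (isFactor_iff_infix.2 hvx)
  · obtain ⟨hL₁, hc₁⟩ := isLyndon_and_isChain_toList hl₁
    obtain ⟨hL₂, hc₂⟩ := isLyndon_and_isChain_toList hl₂
    refine List.map_injective_iff.2 FreeMonoid.toList.injective
      (ListWord.lyndon_factorization_unique hL₁ hc₁ hL₂ hc₂ ?_)
    rw [← FreeMonoid.toList_prod, ← FreeMonoid.toList_prod, h]
  · obtain ⟨L, hL, hc, hLw⟩ := ListWord.exists_lyndon_factorization w.toList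
    refine ⟨L.map FreeMonoid.ofList, ⟨?_, ?_⟩, FreeMonoid.toList.injective ?_⟩
    · simp only [List.mem_map]
      rintro _ ⟨x, hx, rfl⟩
      refine ⟨isLyndon_iff_toList.2 (hL x hx), mem_nw_of_isFactor hw (isFactor_iff_infix.2 ?_)⟩
      exact hLw ▸ List.infix_of_mem_flatten hx
    · exact (List.isChain_map _).2 (hc.imp fun _ _ => plexLe_iff_toList.2)
    · simpa [FreeMonoid.toList_prod, Function.comp_def] using hLw

end NC4

section Counting

variable {β : Type*}

theorem Set.ncard_setOf_isChain_coe_mem (R : β → β → Prop) [IsTrans β R] [Std.Antisymm R]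
    [Std.Total R] (M : Set (Multiset β)) :
    {l : List β | l.IsChain R ∧ (l : Multiset β) ∈ M}.ncard = M.ncard := by
  classical
  have hinj : Set.InjOn ((↑) : List β → Multiset β) {l | l.IsChain R ∧ (l : Multiset β) ∈ M} :=
    fun l₁ h₁ l₂ h₂ h => (Quotient.exact h).eq_of_pairwise' (r := R)
      (List.isChain_iff_pairwise.1 h₁.1) (List.isChain_iff_pairwise.1 h₂.1)
  rw [← hinj.ncard_image]
  congr 1
  ext s
  refine ⟨fun ⟨l, hl, hls⟩ => hls ▸ hl.2, fun hs => ⟨s.sort R, ⟨?_, by simpa using hs⟩, by simp⟩⟩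
  exact List.isChain_iff_pairwise.2 (Multiset.pairwise_sort s R)

theorem sum_ncard_setOf_eq_ncard_setOf_le {γ : Type*} (p : γ → Prop) (f : γ → ℕ) (n : ℕ)
    (hT : {x | p x ∧ f x ≤ n}.Finite) :
    ∑ i ∈ Finset.range (n + 1), {x | p x ∧ f x = i}.ncard = {x | p x ∧ f x ≤ n}.ncard := by
  classical
  rw [Set.ncard_eq_toFinset_card _ hT, Finset.card_eq_sum_card_fiberwise (f := f)
    (t := Finset.range (n + 1))
    fun x hx => Finset.mem_range.2 (Nat.lt_succ_of_le (hT.mem_toFinset.1 hx).2)]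
  refine Finset.sum_congr rfl fun i hi => ?_
  rw [← Set.ncard_coe_finset, Finset.coe_filter]
  congr 1
  ext x
  simp only [Set.Finite.mem_toFinset]
  exact ⟨fun ⟨hx, hxi⟩ => ⟨⟨hx, hxi ▸ Nat.le_of_lt_succ (Finset.mem_range.1 hi)⟩, hxi⟩,
    fun ⟨⟨hx, _⟩, hxi⟩ => ⟨hx, hxi⟩⟩

def multisetsOfWeightLe (S : Set β) (w : β → ℕ) (n : ℕ) : Set (Multiset β) :=
  {s | (∀ u ∈ s, u ∈ S) ∧ (s.map w).sum ≤ n}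

theorem Multiset.card_le_sum_map {s : Multiset β} {w : β → ℕ} (hw : ∀ u ∈ s, 1 ≤ w u) :
    Multiset.card s ≤ (s.map w).sum := by
  simpa using Multiset.card_nsmul_le_sum (s := s.map w) (a := 1) (by simpa using hw)

/-- Multiplicities embed multisets on `S` of cardinality at most `n` into `S → Fin (n + 1)`. -/
theorem finite_and_ncard_le_setOf_card_le {S : Set β} (hS : S.Finite) (n : ℕ) :
    {s : Multiset β | (∀ u ∈ s, u ∈ S) ∧ Multiset.card s ≤ n}.Finite ∧
      {s : Multiset β | (∀ u ∈ s, u ∈ S) ∧ Multiset.card s ≤ n}.ncard ≤ (n + 1) ^ S.ncard := by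
  classical
  have := hS.to_subtype
  have hinj : Set.InjOn (fun (s : Multiset β) (u : S) => Fin.ofNat (n + 1) (s.count (u : β)))
      {s : Multiset β | (∀ u ∈ s, u ∈ S) ∧ Multiset.card s ≤ n} := by
    intro s hs t ht h
    ext u
    by_cases hu : u ∈ S
    · have hsu := (Multiset.count_le_card u s).trans hs.2
      have htu := (Multiset.count_le_card u t).trans ht.2
      simpa [Fin.ext_iff, Fin.val_ofNat, Nat.mod_eq_of_lt (Nat.lt_succ_of_le hsu),
        Nat.mod_eq_of_lt (Nat.lt_succ_of_le htu)] using congrFun h ⟨u, hu⟩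
    · rw [Multiset.count_eq_zero.2 fun h => hu (hs.1 u h),
        Multiset.count_eq_zero.2 fun h => hu (ht.1 u h)]
  refine ⟨Set.Finite.of_injOn (Set.mapsTo_univ _ _) hinj Set.finite_univ, ?_⟩
  calc _ ≤ (Set.univ : Set (S → Fin (n + 1))).ncard :=
        Set.ncard_le_ncard_of_injOn _ (Set.mapsTo_univ _ _) hinj Set.finite_univ
    _ = (n + 1) ^ S.ncard := by simp [Set.ncard_univ, Nat.card_fun]

theorem multisetsOfWeightLe_subset {S : Set β} {w : β → ℕ}
    (hw : ∀ u ∈ S, 1 ≤ w u) (n : ℕ) :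
    multisetsOfWeightLe S w n ⊆
      {s : Multiset β | (∀ u ∈ s, u ∈ {u | u ∈ S ∧ w u ≤ n}) ∧ Multiset.card s ≤ n} :=
  fun _ ⟨hsS, hsn⟩ => ⟨fun u hu =>
      ⟨hsS u hu, (Multiset.le_sum_of_mem (Multiset.mem_map_of_mem w hu)).trans hsn⟩,
    (Multiset.card_le_sum_map fun u hu => hw u (hsS u hu)).trans hsn⟩

theorem finite_multisetsOfWeightLe {S : Set β} {w : β → ℕ} (hw : ∀ u ∈ S, 1 ≤ w u) {n : ℕ}
    (hfin : {u | u ∈ S ∧ w u ≤ n}.Finite) : (multisetsOfWeightLe S w n).Finite :=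
  (finite_and_ncard_le_setOf_card_le hfin n).1.subset (multisetsOfWeightLe_subset hw n)

theorem ncard_multisetsOfWeightLe_le {S : Set β} {w : β → ℕ} (hS : S.Finite)
    (hw : ∀ u ∈ S, 1 ≤ w u) (n : ℕ) :
    (multisetsOfWeightLe S w n).ncard ≤ (n + 1) ^ S.ncard := by
  have hS' : {u | u ∈ S ∧ w u ≤ n} ⊆ S := fun u hu => hu.1
  have h := finite_and_ncard_le_setOf_card_le (hS.subset hS') n
  calc _ ≤ _ := Set.ncard_le_ncard (multisetsOfWeightLe_subset hw n) h.1
    _ ≤ (n + 1) ^ {u | u ∈ S ∧ w u ≤ n}.ncard := h.2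
    _ ≤ (n + 1) ^ S.ncard := Nat.pow_le_pow_right n.succ_pos (Set.ncard_le_ncard hS' hS)

/-- Any `c : F → Fin (Q + 1)` gives the multiset `∑ u, c u • {u}`, of weight at most
`Q * ∑ u ∈ F, w u`; taking `Q = n / (∑ u ∈ F, w u + 1)` gives the bound. -/
theorem exists_pow_le_mul_ncard_multisetsOfWeightLe {S F : Set β} {w : β → ℕ} (hF : F.Finite)
    (hFS : F ⊆ S) (hfin : ∀ n, (multisetsOfWeightLe S w n).Finite) :
    ∃ B, ∀ n, (n + 1) ^ F.ncard ≤ B * (multisetsOfWeightLe S w n).ncard := by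
  classical
  have := hF.fintype
  set D := ∑ u : F, w u
  refine ⟨(D + 1) ^ F.ncard, fun n => ?_⟩
  set Q := n / (D + 1)
  let ψ : (F → Fin (Q + 1)) → Multiset β := fun c => ∑ u : F, (c u : ℕ) • {(u : β)}
  have hcount : ∀ c (u : F), (ψ c).count (u : β) = c u := fun c u => by
    simp [ψ, Multiset.count_sum', Multiset.count_singleton, Subtype.val_inj]
  have hweight : ∀ c, ((ψ c).map w).sum = ∑ u : F, (c u : ℕ) * w u := fun c => by
    rw [show ((ψ c).map w).sum = (Multiset.sumAddMonoidHom.comp (Multiset.mapAddMonoidHom w)) (ψ c)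
      from rfl, map_sum]
    simp [Multiset.mapAddMonoidHom, Multiset.map_nsmul, Multiset.sum_nsmul]
  have hmaps : Set.MapsTo ψ Set.univ (multisetsOfWeightLe S w n) := by
    intro c _
    refine ⟨fun u hu => ?_, ?_⟩
    · obtain ⟨v, -, hv⟩ := Multiset.mem_sum.1 hu
      rw [Multiset.mem_singleton.1 (Multiset.mem_of_mem_nsmul hv)]
      exact hFS v.2
    · calc ((ψ c).map w).sum = ∑ u : F, (c u : ℕ) * w u := hweight c
        _ ≤ ∑ u : F, Q * w u :=
          Finset.sum_le_sum fun u _ => Nat.mul_le_mul_right _ (Nat.le_of_lt_succ (c u).2)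
        _ = Q * D := by rw [Finset.mul_sum]
        _ ≤ Q * (D + 1) := Nat.mul_le_mul_left _ (Nat.le_succ D)
        _ ≤ n := Nat.div_mul_le_self n (D + 1)
  have hinj : Set.InjOn ψ Set.univ := fun c₁ _ c₂ _ h =>
    funext fun u => Fin.ext (by rw [← hcount, ← hcount, h])
  calc (n + 1) ^ F.ncard ≤ ((D + 1) * (Q + 1)) ^ F.ncard := Nat.pow_le_pow_left
        (Nat.lt_mul_div_succ n (Nat.succ_pos D)) _
    _ = (D + 1) ^ F.ncard * (Set.univ : Set (F → Fin (Q + 1))).ncard := by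
      simp [mul_pow, Set.ncard_univ]
    _ ≤ _ := Nat.mul_le_mul_left _ (Set.ncard_le_ncard_of_injOn ψ hmaps hinj (hfin n))

end Counting

namespace NC2

theorem PolyBoundedBy.mono {H : ℕ → ℕ} {d d' : ℕ} (h : PolyBoundedBy H d) (hd : d ≤ d') :
    PolyBoundedBy H d' :=
  let ⟨C, hC⟩ := h
  ⟨C, fun n => (hC n).trans (Nat.mul_le_mul_left C (Nat.pow_le_pow_right n.succ_pos hd))⟩

theorem le_of_forall_pow_le_mul_pow {a b B : ℕ} (h : ∀ n, (n + 1) ^ a ≤ B * (n + 1) ^ b) :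
    a ≤ b := by
  by_contra! hab
  have h₁ : (B + 1) ^ b * (B + 1) ≤ B * (B + 1) ^ b :=
    calc (B + 1) ^ b * (B + 1) = (B + 1) ^ (b + 1) := (pow_succ _ _).symm
      _ ≤ (B + 1) ^ a := Nat.pow_le_pow_right B.succ_pos hab
      _ ≤ B * (B + 1) ^ b := h B
  nlinarith [Nat.one_le_pow b (B + 1) B.succ_pos]

variable {H : ℕ → ℕ} {c : ℕ∞}

theorem polyBoundedBy_iff_of_bounds (hupper : ∀ d : ℕ, c = d → PolyBoundedBy H d)
    (hlower : ∀ m : ℕ, (m : ℕ∞) ≤ c → ∃ B, ∀ n, (n + 1) ^ m ≤ B * psum H n) (d : ℕ) :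
    PolyBoundedBy H d ↔ c ≤ d := by
  refine ⟨fun ⟨C, hC⟩ => ?_, fun h => ?_⟩
  · by_contra! hlt
    obtain ⟨B, hB⟩ := hlower (d + 1) (Order.add_one_le_of_lt hlt)
    have := le_of_forall_pow_le_mul_pow (B := B * C) fun n =>
      (hB n).trans (by rw [mul_assoc]; exact Nat.mul_le_mul_left B (hC n))
    omega
  · lift c to ℕ using (h.trans_lt (ENat.natCast_lt_top d)).ne
    exact (hupper c rfl).mono (by exact_mod_cast h)

theorem gkdimH_eq_of_polyBoundedBy_iff (h : ∀ d, PolyBoundedBy H d ↔ c ≤ d) : gkdimH H = c := by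
  simp only [gkdimH, h]
  refine le_antisymm ?_ (le_sInf ?_)
  · induction c using ENat.recTopCoe with
    | top => exact le_top
    | coe m => exact sInf_le ⟨m, le_refl (m : ℕ∞), rfl⟩
  · rintro _ ⟨d, hd, rfl⟩
    exact hd

theorem polyGrowth_iff_of_polyBoundedBy_iff (h : ∀ d, PolyBoundedBy H d ↔ c ≤ d) :
    PolyGrowth H ↔ c ≠ ⊤ := by
  simp only [PolyGrowth, h]
  exact ⟨fun ⟨d, hd⟩ => ne_top_of_le_ne_top (ENat.natCast_ne_top d) hd,
    fun hc => ⟨c.toNat, (ENat.natCast_toNat hc).ge⟩⟩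

end NC2

namespace NC4

open NC NC2

variable {N : ℕ} {k : Type} [Field k] [LinearOrder (FreeMonoid (Fin N))]
  {𝔞 : Submodule k (FA k (Fin N))} {G : Set (FA k (Fin N))} {e : Fin N → ℕ}

theorem one_le_mdeg_of_mem_lyndonNormal (he : ∀ x, 0 < e x) {u : FreeMonoid (Fin N)}
    (hu : u ∈ LyndonNormal G) : 1 ≤ mdeg e u :=
  (Nat.one_le_iff_ne_zero.2 fun h => hu.1.1 (FreeMonoid.length_eq_zero.1 h)).trans
    (length_le_mdeg he u)

theorem finite_multisetsOfWeightLe_lyndonNormal (he : ∀ x, 0 < e x) (n : ℕ) :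
    (multisetsOfWeightLe (LyndonNormal G) (mdeg e) n).Finite :=
  finite_multisetsOfWeightLe (fun _ hu => one_le_mdeg_of_mem_lyndonNormal he hu)
    ((finite_setOf_mdeg_le he n).subset fun _ hu => hu.2)

theorem hilb_eq_ncard_sortedLyndonLists (hadm : IsAdmissible (Fin N)) (hh : IsHomogIdeal e 𝔞)
    (hGB : IsGrobner 𝔞 G) (hmon : ∀ g ∈ G, g.coeff (lw g) = 1)
    (hLyn : ∀ u ∈ lwSet G, IsLyndon u) (n : ℕ) :
    hilb e 𝔞 n = {l | l ∈ sortedLyndonLists G ∧ (l.map (mdeg e)).sum = n}.ncard := by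
  have hbij := bijOn_prod_sortedLyndonLists hLyn
  have hset : {l | l ∈ sortedLyndonLists G ∧ (l.map (mdeg e)).sum = n} =
      sortedLyndonLists G ∩ List.prod ⁻¹' {u | mdeg e u = n} := by
    ext l
    simp [mdeg_prod]
  rw [hilb_eq_ncard_nw hadm hh hGB hmon, hset,
    ← (hbij.injOn.mono Set.inter_subset_left).ncard_image, Set.image_inter_preimage,
    hbij.image_eq, Set.inter_comm]

theorem psum_hilb_eq_ncard (hadm : IsAdmissible (Fin N)) (he : ∀ x, 0 < e x)
    (hh : IsHomogIdeal e 𝔞) (hGB : IsGrobner 𝔞 G) (hmon : ∀ g ∈ G, g.coeff (lw g) = 1)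
    (hLyn : ∀ u ∈ lwSet G, IsLyndon u) (n : ℕ) :
    psum (fun n => hilb e 𝔞 n) n = (multisetsOfWeightLe (LyndonNormal G) (mdeg e) n).ncard := by
  refine (Finset.sum_congr rfl fun i _ => ?_).trans (sum_ncard_setOf_eq_ncard_setOf_le
    (fun s : Multiset (FreeMonoid (Fin N)) => ∀ u ∈ s, u ∈ LyndonNormal G)
    (fun s => (s.map (mdeg e)).sum) n (finite_multisetsOfWeightLe_lyndonNormal he n))
  beta_reduce
  rw [hilb_eq_ncard_sortedLyndonLists hadm hh hGB hmon hLyn,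
    ← Set.ncard_setOf_isChain_coe_mem PlexLe]
  congr 1
  ext l
  simp only [sortedLyndonLists, Set.mem_ofPred_eq, Multiset.mem_coe, Multiset.map_coe,
    Multiset.sum_coe]
  tauto

theorem polyBoundedBy_hilb_iff (hadm : IsAdmissible (Fin N)) (he : ∀ x, 0 < e x)
    (hh : IsHomogIdeal e 𝔞) (hGB : IsGrobner 𝔞 G) (hmon : ∀ g ∈ G, g.coeff (lw g) = 1)
    (hLyn : ∀ u ∈ lwSet G, IsLyndon u) (d : ℕ) :
    PolyBoundedBy (fun n => hilb e 𝔞 n) d ↔ (LyndonNormal G).encard ≤ d := by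
  have hw : ∀ u ∈ LyndonNormal G, 1 ≤ mdeg e u := fun u hu => one_le_mdeg_of_mem_lyndonNormal he hu
  have hpsum := psum_hilb_eq_ncard hadm he hh hGB hmon hLyn
  refine polyBoundedBy_iff_of_bounds (fun d hd => ⟨1, fun n => ?_⟩) (fun m hm => ?_) d
  · have h𝔏 := Set.finite_of_encard_eq_coe hd
    rw [one_mul, hpsum, ← ENat.natCast_inj.1 (h𝔏.cast_ncard_eq.trans hd)]
    exact ncard_multisetsOfWeightLe_le h𝔏 hw n
  · obtain ⟨F, hF𝔏, hFm⟩ := Set.exists_subset_encard_eq hm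
    have hF := Set.finite_of_encard_eq_coe hFm
    obtain ⟨B, hB⟩ := exists_pow_le_mul_ncard_multisetsOfWeightLe hF hF𝔏
      (finite_multisetsOfWeightLe_lyndonNormal he)
    refine ⟨B, fun n => ?_⟩
    rw [hpsum, ← ENat.natCast_inj.1 (hF.cast_ncard_eq.trans hFm)]
    exact hB n

end NC4

/-- if the obstructions of the reduced Gröbner basis `G` of a homogeneous
ideal consist of Lyndon words, then the Hilbert series of `A = k⟨X⟩/𝔞` is
`∏_{u ∈ 𝔏(G)} (1 - t^{deg u})⁻¹` (coefficientwise, the `n`-th coefficient of the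
product being the number of `≤_plex`-sorted lists from `𝔏(G)` of total degree `n`),
the Gelfand-Kirillov dimension of `A` equals the cardinality of `𝔏(G)`, and `A` has
polynomial growth iff `𝔏(G)` is finite. -/
theorem stmt_7 (k : Type) [Field k] (N : ℕ) [LinearOrder (FreeMonoid (Fin N))]
    (hadm : NC.IsAdmissible (Fin N)) (e : Fin N → ℕ) (he : ∀ x, 0 < e x)
    (𝔞 : Submodule k (NC.FA k (Fin N))) (hh : NC2.IsHomogIdeal e 𝔞)
    (G : Set (NC.FA k (Fin N))) (hGB : NC.IsGrobner 𝔞 G) (hred : NC.IsReducedGB G)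
    (hLyn : ∀ u ∈ NC.lwSet G, NC4.IsLyndon u) :
    (∀ n : ℕ, NC2.hilb e 𝔞 n =
      Set.ncard {l : List (FreeMonoid (Fin N)) |
        (∀ u ∈ l, u ∈ NC4.LyndonNormal G) ∧ List.Chain' NC4.PlexLe l ∧
        (l.map (NC2.mdeg e)).sum = n}) ∧
    NC2.gkdimH (fun n => NC2.hilb e 𝔞 n) = (NC4.LyndonNormal (k := k) G).encard ∧
    (NC2.PolyGrowth (fun n => NC2.hilb e 𝔞 n) ↔ (NC4.LyndonNormal (k := k) G).Finite) := by
  have hmon : ∀ g ∈ G, g.coeff (NC.lw g) = 1 := fun g hg => (hred g hg).1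
  have hbound := NC4.polyBoundedBy_hilb_iff hadm he hh hGB hmon hLyn
  exact ⟨fun n => (NC4.hilb_eq_ncard_sortedLyndonLists hadm hh hGB hmon hLyn n).trans
      (congrArg Set.ncard (Set.ext fun _ => and_assoc)),
    NC2.gkdimH_eq_of_polyBoundedBy_iff hbound,
    (NC2.polyGrowth_iff_of_polyBoundedBy_iff hbound).trans Set.encard_ne_top_iff⟩
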